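/- Let G be a finite simple graph, S ⊆ V_G a subset of vertices, X a vector field on G regarded as the operator Xφ(i) = Σ_{darts u with π(u)=i} X(u)(φ(π₊(u)) − φ(π(u))), and φ ∈ C(G). Then Σ_{i∈S} Xφ(i) = Σ_{i∈S} φ(i)·div X(i) + Σ_{boundary darts u} n_S(u)·φ(π(u))·X(ū), where the last sum is over all darts u with exactly one endpoint in S, and n_S(u) = +1 if π(u) ∉ S and n_S(u) = −1 if π(u) ∈ S. -/

import Mathlib

/-! Summing over the vertices of `S` turns both vertex sums into sums over the darts based in `S`.
Their difference is `Σ_{π(u) ∈ S} (X(u) φ(π₊(u)) − φ(π(u)) X(ū))`; reindexing the first term by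
reversal `u ↦ ū` makes it a sum over the darts ending in `S`, and the two sums cancel on every dart
except the boundary ones, where what survives carries the sign `n_S(u)`. -/

open SimpleGraph Finset

variable {V : Type*} [Fintype V] [DecidableEq V]

/-- The gradient of a function `φ : V → ℝ`: the vector field `(∇φ)(u) = φ(π₊(u)) − φ(π(u))`. -/
def grad (G : SimpleGraph V) (φ : V → ℝ) : G.Dart → ℝ := fun u => φ u.snd - φ u.fst

/-- The divergence of a vector field: `(div X)(i) = Σ_{darts u with π(u)=i} (X(ū) − X(u))`. -/
def divergence (G : SimpleGraph V) [DecidableRel G.Adj] (X : G.Dart → ℝ) : V → ℝ :=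
  fun i => ∑ u ∈ Finset.univ.filter (fun u : G.Dart => u.fst = i), (X u.symm - X u)
/-- A vector field `X` regarded as a first order differential operator:
`Xφ(i) = Σ_{darts u with π(u)=i} X(u)(φ(π₊(u)) − φ(π(u)))`. -/
def fieldOp (G : SimpleGraph V) [DecidableRel G.Adj] (X : G.Dart → ℝ) (φ : V → ℝ) : V → ℝ :=
  fun i => ∑ u ∈ Finset.univ.filter (fun u : G.Dart => u.fst = i), X u * (φ u.snd - φ u.fst)

section

variable {G : SimpleGraph V} [DecidableRel G.Adj]

theorem sum_fieldOp (S : Finset V) (X : G.Dart → ℝ) (φ : V → ℝ) :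
    ∑ i ∈ S, fieldOp G X φ i = ∑ u : G.Dart with u.fst ∈ S, X u * (φ u.snd - φ u.fst) :=
  sum_fiberwise_eq_sum_filter _ _ _ _

theorem sum_mul_divergence (S : Finset V) (X : G.Dart → ℝ) (φ : V → ℝ) :
    ∑ i ∈ S, φ i * divergence G X i = ∑ u : G.Dart with u.fst ∈ S, φ u.fst * (X u.symm - X u) := by
  rw [← sum_fiberwise_eq_sum_filter]
  refine sum_congr rfl fun i _ => ?_
  rw [divergence, mul_sum]
  exact sum_congr rfl fun u hu => by rw [(mem_filter.1 hu).2]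

theorem sum_filter_fst_mem_symm {M : Type*} [AddCommMonoid M] (S : Finset V) (f : G.Dart → M) :
    ∑ u : G.Dart with u.fst ∈ S, f u.symm = ∑ u : G.Dart with u.snd ∈ S, f u := by
  rw [sum_filter, sum_filter, ← Equiv.sum_comp (Dart.symm_involutive.toPerm _)]
  simp

end

theorem sum_filter_xor_sign {α R : Type*} [Fintype α] [Ring R] (p q : α → Prop)
    [DecidablePred p] [DecidablePred q] (f : α → R) :
    ∑ a with Xor (p a) (q a), (if p a then -1 else 1) * f a =
      ∑ a with q a, f a - ∑ a with p a, f a := by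
  rw [sum_filter, sum_filter, sum_filter, ← sum_sub_distrib]
  refine sum_congr rfl fun a _ => ?_
  by_cases hp : p a <;> by_cases hq : q a <;> simp [hp, hq]

/-- For a subset `S` of vertices, a vector field `X` regarded as a first order
differential operator, and `φ ∈ C(G)`:
`Σ_{i∈S} Xφ(i) = Σ_{i∈S} φ(i)·div X(i) + Σ_{boundary darts u} n_S(u)·φ(π(u))·X(ū)`. -/
theorem fieldOp_sum_eq_div_add_boundary (G : SimpleGraph V) [DecidableRel G.Adj]
    (S : Finset V) (X : G.Dart → ℝ) (φ : V → ℝ) :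
    ∑ i ∈ S, fieldOp G X φ i =
      (∑ i ∈ S, φ i * divergence G X i) +
      ∑ u ∈ Finset.univ.filter (fun u : G.Dart => Xor (u.fst ∈ S) (u.snd ∈ S)),
        (if u.fst ∈ S then (-1 : ℝ) else 1) * (φ u.fst * X u.symm) := by
  rw [sum_fieldOp, sum_mul_divergence, sum_filter_xor_sign,
    ← sum_filter_fst_mem_symm S fun u : G.Dart => φ u.fst * X u.symm]
  simp only [Dart.symm_symm, Dart.symm_toProd, Prod.fst_swap, ← sum_sub_distrib, ← sum_add_distrib]
  exact sum_congr rfl fun u _ => by ring
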